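/- arXiv:1606.04461 — 8 statements merged into one kernel-verified Lean document; each statement's English description precedes it below -/
import Mathlib

section
/- Let r ≥ 2, 2 ≤ h ≤ r, and k ≥ 3 be integers, and let G be an r-regular finite simple graph. If G has an h-factor that is completely k-magic, then G is completely k-magic. -/
/-!
Label every edge of `G` outside the `h`-factor `H` by `1`. Each vertex then sees its `H`-sum plus
`r - h`, so a `(c - (r - h))`-sum labeling of `H` extends to a `c`-sum labeling of `G`.
-/

open Classical in
/-- The sum of the labels `ℓ s(v,u)` over all neighbors `u` of `v` in `G`. -/
noncomputable def vertexLabelSum {V : Type*} [Fintype V] (G : SimpleGraph V)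
    {M : Type*} [AddCommMonoid M] (ℓ : Sym2 V → M) (v : V) : M :=
  ∑ u ∈ Finset.univ.filter (fun u => G.Adj v u), ℓ s(v, u)

/-- `ℓ` is a `c`-sum `k`-magic labeling of `G`: it is nonzero on every edge of `G`
and the labels around every vertex sum to `c` in `ZMod k`. -/
def IsMagicLabeling {V : Type*} [Fintype V] (G : SimpleGraph V) (k : ℕ) (c : ZMod k)
    (ℓ : Sym2 V → ZMod k) : Prop :=
  (∀ e ∈ G.edgeSet, ℓ e ≠ 0) ∧ ∀ v : V, vertexLabelSum G ℓ v = c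

/-- `G` is `c`-sum `k`-magic. -/
def IsSumMagic {V : Type*} [Fintype V] (G : SimpleGraph V) (k : ℕ) (c : ZMod k) : Prop :=
  ∃ ℓ : Sym2 V → ZMod k, IsMagicLabeling G k c ℓ

/-- `G` is completely `k`-magic: `c`-sum `k`-magic for every `c ∈ ZMod k`. -/
def CompletelyMagic {V : Type*} [Fintype V] (G : SimpleGraph V) (k : ℕ) : Prop :=
  ∀ c : ZMod k, IsSumMagic G k c

/-- The sum spectrum of `G` with respect to `k`. -/
def sumSpectrum {V : Type*} [Fintype V] (G : SimpleGraph V) (k : ℕ) : Set (ZMod k) :=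
  {c : ZMod k | IsSumMagic G k c}

open Classical in
/-- Degree of a vertex (classical, to avoid decidability assumptions). -/
noncomputable def degreeOf {V : Type*} [Fintype V] (G : SimpleGraph V) (v : V) : ℕ :=
  (Finset.univ.filter (fun u => G.Adj v u)).card

/-- `G` is `r`-regular. -/
def IsRegularDeg {V : Type*} [Fintype V] (G : SimpleGraph V) (r : ℕ) : Prop :=
  ∀ v : V, degreeOf G v = r

open Finset

section extension

variable {V : Type*} [Fintype V] {G H : SimpleGraph V} {M : Type*} [AddCommMonoid M]

open Classical in
theorem neighborFilter_subset_of_le (hHG : H ≤ G) (v : V) :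
    univ.filter (fun u => H.Adj v u) ⊆ univ.filter (fun u => G.Adj v u) := by
  intro u hu
  simp only [mem_filter, mem_univ, true_and] at hu ⊢
  exact hHG hu

open Classical in
theorem vertexLabelSum_extend_const (hHG : H ≤ G) (ℓ : Sym2 V → M) (a : M) (v : V) :
    vertexLabelSum G (fun e => if e ∈ H.edgeSet then ℓ e else a) v =
      vertexLabelSum H ℓ v + (degreeOf G v - degreeOf H v) • a := by
  have hsub := neighborFilter_subset_of_le hHG v
  have on_H : ∀ u ∈ univ.filter (fun u => H.Adj v u),
      (if s(v, u) ∈ H.edgeSet then ℓ s(v, u) else a) = ℓ s(v, u) := by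
    intro u hu
    exact if_pos (by simpa using hu)
  have off_H : ∀ u ∈ univ.filter (fun u => G.Adj v u) \ univ.filter (fun u => H.Adj v u),
      (if s(v, u) ∈ H.edgeSet then ℓ s(v, u) else a) = a := by
    intro u hu
    exact if_neg (by simp_all)
  rw [vertexLabelSum, ← sum_sdiff hsub, sum_congr rfl off_H, sum_congr rfl on_H, sum_const,
    card_sdiff_of_subset hsub, add_comm]
  rfl

end extension

theorem IsSumMagic.of_le {V : Type*} [Fintype V] {G H : SimpleGraph V} {k r h : ℕ} {c : ZMod k}
    (hc : IsSumMagic H k c) (hHG : H ≤ G) (hk : k ≠ 1) (hH : IsRegularDeg H h)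
    (hG : IsRegularDeg G r) : IsSumMagic G k (c + (r - h : ℕ)) := by
  classical
  obtain ⟨ℓ, hℓ_ne, hℓ_sum⟩ := hc
  have : Nontrivial (ZMod k) := ZMod.nontrivial_iff.mpr hk
  refine ⟨fun e => if e ∈ H.edgeSet then ℓ e else 1, fun e _ => ?_, fun v => ?_⟩
  · dsimp only
    split_ifs with he
    exacts [hℓ_ne e he, one_ne_zero]
  · rw [vertexLabelSum_extend_const hHG, hℓ_sum, hG, hH, nsmul_one]

theorem completely_magic_of_factor_general {V : Type*} [Fintype V] (G : SimpleGraph V)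
    (r h k : ℕ) (hk : 3 ≤ k)
    (hreg : IsRegularDeg G r)
    (hfac : ∃ H : SimpleGraph V, H ≤ G ∧ IsRegularDeg H h ∧ CompletelyMagic H k) :
    CompletelyMagic G k := by
  obtain ⟨H, hHG, hHreg, hHmagic⟩ := hfac
  intro c
  simpa using (hHmagic (c - (r - h : ℕ))).of_le hHG (by omega) hHreg hreg

/-- If an `r`-regular graph has an `h`-factor that is completely `k`-magic,
then the graph itself is completely `k`-magic. -/
theorem completely_magic_of_factor {V : Type*} [Fintype V] (G : SimpleGraph V)
    (r h k : ℕ) (hr : 2 ≤ r) (hh2 : 2 ≤ h) (hhr : h ≤ r) (hk : 3 ≤ k)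
    (hreg : IsRegularDeg G r)
    (hfac : ∃ H : SimpleGraph V, H ≤ G ∧ IsRegularDeg H h ∧ CompletelyMagic H k) :
    CompletelyMagic G k :=
  completely_magic_of_factor_general G r h k hk hreg hfac
end

section
/- Let G be an r-regular finite simple graph, where r ≥ 3 is odd, and let k ≥ 5 be an integer. Then G is completely k-magic. -/
/-!
Since `G` is `r`-regular, so is its bipartite double cover, which by Hall's theorem splits into
`r` perfect matchings: permutations `σ₁, …, σᵣ` of `V` such that every arc `v → w` of `G` is
`w = σᵢ v` for exactly one `i`. Give the arc `v → σᵢ v` the label `aᵢ`, and the edge `vw` the label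
`c` plus the labels of its two arcs. Every vertex then has label sum `r c + 2 ∑ aᵢ`, which is `c`
when `∑ aᵢ = -q c` for `r = 2 q + 1`, while every edge label has the form `c + aᵢ + aⱼ`. It remains
to choose `a ∈ ℤ_kʳ` with prescribed sum and no `aᵢ + aⱼ` equal to `-c`: for `k ≥ 5` the `aᵢ` can be
taken from an interval `p, p + 1, …, p + m` of length about `k / 2` whose sumset misses `-c`.
-/

open Finset

theorem exists_fin_sum_eq_of_le_mul {r m N : ℕ} (hN : N ≤ r * m) :
    ∃ f : Fin r → ℕ, (∀ i, f i ≤ m) ∧ ∑ i, f i = N := by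
  induction r generalizing N with
  | zero => exact ⟨Fin.elim0, fun i => i.elim0, by simp_all⟩
  | succ r ih =>
    obtain ⟨f, hfm, hf⟩ := ih (N := N - min m N) (by rw [Nat.succ_mul] at hN; omega)
    refine ⟨Fin.cons (min m N) f, Fin.cases (min_le_left m N) hfm, ?_⟩
    rw [Fin.sum_cons, hf]
    omega

namespace ZMod

variable {k : ℕ}

theorem exists_sum_eq_forall_add_ne_of_le_mul {r m N : ℕ} {p u t : ZMod k}
    (hu : ∀ n ≤ 2 * m, 2 * p + n ≠ u) (hN : N ≤ r * m) (ht : t = r * p + N) :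
    ∃ a : Fin r → ZMod k, ∑ i, a i = t ∧ ∀ i j, a i + a j ≠ u := by
  obtain ⟨f, hfm, rfl⟩ := exists_fin_sum_eq_of_le_mul hN
  refine ⟨fun i => p + f i, by simp [ht, sum_add_distrib], fun i j => ?_⟩
  convert hu (f i + f j) (by linarith [hfm i, hfm j]) using 1
  push_cast
  ring

theorem exists_forall_two_mul_add_ne {m : ℕ} (hm : 2 * m + 3 ≤ k) (u : ZMod k) :
    ∃ p : ZMod k, ∀ n ≤ 2 * m, 2 * p + n ≠ u := by
  have : NeZero k := ⟨by omega⟩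
  refine ⟨((u.val + 2) / 2 : ℕ), fun n hn h => ?_⟩
  -- `2 * p = u + e` with `e ∈ {1, 2}`, and `0 < e + n < k`
  set e := 2 * ((u.val + 2) / 2) - u.val
  have he : ((2 * ((u.val + 2) / 2) : ℕ) : ZMod k) = u + e := by
    rw [show 2 * ((u.val + 2) / 2) = u.val + e by omega]
    push_cast
    rw [natCast_zmod_val]
  have hdvd : k ∣ e + n := by
    rw [← natCast_eq_zero_iff]
    push_cast at he ⊢
    linear_combination h - he
  have := Nat.le_of_dvd (by omega) hdvd
  omega

theorem exists_sum_eq_forall_add_ne {r : ℕ} (hk : 5 ≤ k) (hr : 3 ≤ r) (hodd : Odd r)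
    (u t : ZMod k) : ∃ a : Fin r → ZMod k, ∑ i, a i = t ∧ ∀ i j, a i + a j ≠ u := by
  have : NeZero k := ⟨by omega⟩
  set m := (k - 3) / 2
  suffices ∃ p : ZMod k, (∀ n ≤ 2 * m, 2 * p + n ≠ u) ∧ ∃ N ≤ r * m, t = r * p + N by
    obtain ⟨p, hu, N, hN, ht⟩ := this
    exact exists_sum_eq_forall_add_ne_of_le_mul hu hN ht
  by_cases hkr : k - 1 ≤ r * m
  · obtain ⟨p, hp⟩ := exists_forall_two_mul_add_ne (show 2 * m + 3 ≤ k by omega) u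
    exact ⟨p, hp, (t - r * p).val, by have := (t - r * p).val_lt; omega, by simp⟩
  · obtain ⟨rfl, rfl | rfl | rfl⟩ : r = 3 ∧ (k = 5 ∨ k = 6 ∨ k = 8) := by
      rcases (show r = 3 ∨ 5 ≤ r by obtain ⟨q, rfl⟩ := hodd; omega) with rfl | hr5
      · omega
      · have := Nat.mul_le_mul_right m hr5
        omega
    -- the three remaining moduli are checked exhaustively
    all_goals revert u t; decide

end ZMod

section PermDecomposition

variable {V : Type*} [Fintype V] [DecidableEq V]

theorem exists_perm_forall_pos_of_sum_eq {c : ℕ} (hc : 0 < c) {M : V → V → ℕ}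
    (hrow : ∀ v, ∑ w, M v w = c) (hcol : ∀ w, ∑ v, M v w = c) :
    ∃ σ : Equiv.Perm V, ∀ v, 0 < M v (σ v) := by
  let supp (v : V) : Finset V := {w | 0 < M v w}
  have hall (S : Finset V) : #S ≤ #(S.biUnion supp) := by
    refine le_of_mul_le_mul_left ?_ hc
    calc c * #S = ∑ v ∈ S, ∑ w ∈ supp v, M v w := by
          simp [supp, sum_filter_of_ne (fun w _ hw => Nat.pos_of_ne_zero hw), hrow, mul_comm]
      _ ≤ ∑ v ∈ S, ∑ w ∈ S.biUnion supp, M v w :=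
          sum_le_sum fun v hv => sum_le_sum_of_subset (subset_biUnion_of_mem supp hv)
      _ = ∑ w ∈ S.biUnion supp, ∑ v ∈ S, M v w := sum_comm
      _ ≤ ∑ w ∈ S.biUnion supp, ∑ v, M v w :=
          sum_le_sum fun w _ => sum_le_sum_of_subset (subset_univ S)
      _ = c * #(S.biUnion supp) := by simp [hcol, mul_comm]
  obtain ⟨f, hf, hfsupp⟩ := (all_card_le_biUnion_card_iff_exists_injective supp).mp hall
  exact ⟨.ofBijective f (Finite.injective_iff_bijective.mp hf), fun v => by simpa [supp] using hfsupp v⟩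

/-- Integer Birkhoff–von Neumann: a nonnegative integer matrix with all line sums `c`
is a sum of `c` permutation matrices. -/
theorem exists_perms_card_filter_eq_of_sum_eq {c : ℕ} {M : V → V → ℕ}
    (hrow : ∀ v, ∑ w, M v w = c) (hcol : ∀ w, ∑ v, M v w = c) :
    ∃ σ : Fin c → Equiv.Perm V, ∀ v w, #{i | σ i v = w} = M v w := by
  induction c generalizing M with
  | zero =>
    refine ⟨Fin.elim0, fun v w => ?_⟩
    simp [(sum_eq_zero_iff.mp (hrow v)) w (mem_univ w)]
  | succ c ih =>
    obtain ⟨τ, hτ⟩ := exists_perm_forall_pos_of_sum_eq c.succ_pos hrow hcol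
    have hle (v w : V) : (if τ v = w then 1 else 0) ≤ M v w := by
      split_ifs with h
      · exact h ▸ hτ v
      · exact Nat.zero_le _
    obtain ⟨σ, hσ⟩ := ih (M := fun v w => M v w - if τ v = w then 1 else 0)
      (fun v => by simp [sum_tsub_distrib _ fun w _ => hle v w, hrow])
      (fun w => by
        rw [sum_tsub_distrib _ fun v _ => hle v w, hcol]
        simp [← Equiv.eq_symm_apply])
    refine ⟨Fin.cons τ σ, fun v w => ?_⟩
    rw [Fin.card_filter_univ_succ', Fin.cons_zero]
    simp only [Fin.cons_succ, hσ]
    have := hle v w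
    omega

end PermDecomposition

section VertexLabelSum

variable {V : Type*} [Fintype V] (G : SimpleGraph V) {M : Type*} [AddCommMonoid M]

theorem vertexLabelSum_add (ℓ₁ ℓ₂ : Sym2 V → M) (v : V) :
    vertexLabelSum G (fun e => ℓ₁ e + ℓ₂ e) v = vertexLabelSum G ℓ₁ v + vertexLabelSum G ℓ₂ v :=
  sum_add_distrib

theorem vertexLabelSum_const (m : M) (v : V) :
    vertexLabelSum G (fun _ => m) v = degreeOf G v • m := by
  simp [vertexLabelSum, degreeOf]

end VertexLabelSum

namespace SimpleGraph

variable {V : Type*} {G : SimpleGraph V} {r : ℕ} {σ : Fin r → Equiv.Perm V}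
  {M : Type*} [AddCommMonoid M]

open Classical in
/-- A proper `r`-edge-colouring of the bipartite double cover of `G`. -/
def IsPermDecomposition (G : SimpleGraph V) (σ : Fin r → Equiv.Perm V) : Prop :=
  ∀ v w, #{i | σ i v = w} = if G.Adj v w then 1 else 0

open Classical in
noncomputable def permArcLabel (σ : Fin r → Equiv.Perm V) (a : Fin r → M) (v w : V) : M :=
  ∑ i, if σ i v = w then a i else 0

noncomputable def permEdgeLabel (σ : Fin r → Equiv.Perm V) (a : Fin r → M) : Sym2 V → M :=
  Sym2.lift ⟨fun v w => permArcLabel σ a v w + permArcLabel σ a w v, fun _ _ => add_comm _ _⟩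

theorem exists_isPermDecomposition [Fintype V] (hreg : IsRegularDeg G r) :
    ∃ σ : Fin r → Equiv.Perm V, G.IsPermDecomposition σ := by
  classical
  have hdeg (v : V) : ∑ w, (if G.Adj v w then 1 else 0) = r := by simpa [degreeOf] using hreg v
  exact exists_perms_card_filter_eq_of_sum_eq hdeg fun w => by simpa [G.adj_comm] using hdeg w

namespace IsPermDecomposition

theorem adj (h : G.IsPermDecomposition σ) (i : Fin r) (v : V) : G.Adj v (σ i v) := by
  classical
  by_contra hna
  have := h v (σ i v)
  rw [if_neg hna, card_eq_zero, filter_eq_empty_iff] at this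
  exact this (mem_univ i) rfl

theorem isRegularDeg [Fintype V] (h : G.IsPermDecomposition σ) : IsRegularDeg G r := fun v => by
  classical
  calc degreeOf G v = ∑ w, if G.Adj v w then 1 else 0 := by simp [degreeOf]
    _ = ∑ w, #{i | σ i v = w} := sum_congr rfl fun w _ => (h v w).symm
    _ = r := by
      rw [← card_eq_sum_card_fiberwise (f := fun i => σ i v) fun _ _ => mem_univ _, card_univ,
        Fintype.card_fin]

theorem exists_permArcLabel_eq (h : G.IsPermDecomposition σ) {x y : V} (hxy : G.Adj x y)
    (a : Fin r → M) : ∃ i, permArcLabel σ a x y = a i := by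
  classical
  obtain ⟨i, hi⟩ := card_eq_one.mp ((h x y).trans (if_pos hxy))
  exact ⟨i, by rw [permArcLabel, ← sum_filter, hi, sum_singleton]⟩

theorem vertexLabelSum_permEdgeLabel [Fintype V] (h : G.IsPermDecomposition σ) (a : Fin r → M)
    (v : V) : vertexLabelSum G (permEdgeLabel σ a) v = ∑ i, a i + ∑ i, a i := by
  classical
  have hout (i : Fin r) : σ i v ∈ ({w | G.Adj v w} : Finset V) := by simpa using h.adj i v
  have hin (i : Fin r) : (σ i).symm v ∈ ({w | G.Adj v w} : Finset V) := by
    simpa using (h.adj i ((σ i).symm v)).symm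
  simp only [vertexLabelSum, permEdgeLabel, permArcLabel, Sym2.lift_mk, sum_add_distrib]
  congr 1 <;> rw [sum_comm] <;> refine sum_congr rfl fun i _ => ?_
  · rw [sum_ite_eq, if_pos (hout i)]
  · simp_rw [← Equiv.eq_symm_apply]
    rw [sum_ite_eq', if_pos (hin i)]

theorem isSumMagic [Fintype V] (h : G.IsPermDecomposition σ) {k : ℕ} (a : Fin r → ZMod k)
    (g : ZMod k) (hne : ∀ i j, g + (a i + a j) ≠ 0) :
    IsSumMagic G k (r * g + 2 * ∑ i, a i) := by
  refine ⟨fun e => g + permEdgeLabel σ a e, fun e he => ?_, fun v => ?_⟩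
  · induction e using Sym2.ind with
    | h x y =>
      obtain ⟨i, hi⟩ := h.exists_permArcLabel_eq he a
      obtain ⟨j, hj⟩ := h.exists_permArcLabel_eq (G.adj_symm he) a
      simpa [permEdgeLabel, hi, hj] using hne i j
  · rw [vertexLabelSum_add, vertexLabelSum_const, h.isRegularDeg v,
      h.vertexLabelSum_permEdgeLabel, nsmul_eq_mul]
    ring

end IsPermDecomposition

end SimpleGraph

/-- An `r`-regular graph with `r ≥ 3` odd is completely `k`-magic for every `k ≥ 5`. -/
theorem odd_regular_completely_magic {V : Type*} [Fintype V] (G : SimpleGraph V)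
    (r k : ℕ) (hr : 3 ≤ r) (hodd : Odd r) (hk : 5 ≤ k)
    (hreg : IsRegularDeg G r) :
    CompletelyMagic G k := by
  intro c
  obtain ⟨σ, hσ⟩ := G.exists_isPermDecomposition hreg
  obtain ⟨q, hq⟩ := hodd
  -- `c = r * c + 2 * (-(q * c))` because `r = 2 * q + 1`
  obtain ⟨a, ha_sum, ha_ne⟩ := ZMod.exists_sum_eq_forall_add_ne hk hr ⟨q, hq⟩ (-c) (-(q * c))
  convert hσ.isSumMagic a c fun i j hij => ha_ne i j (by linear_combination hij) using 1
  rw [ha_sum, hq]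
  push_cast
  ring
end

section
/- Let k ≥ 5 be an odd integer and G a 2r-regular finite simple graph of order n ≥ 3, where r ≥ 2. If n is odd, then G is completely k-magic. -/
open Finset Function

theorem exists_injective_of_le_card_of_card_le {α β : Type*} [Fintype α] [DecidableEq β]
    (N : α → Finset β) {d : ℕ} (hd : 0 < d) (hN : ∀ a, d ≤ #(N a))
    (hdeg : ∀ b, #{a | b ∈ N a} ≤ d) :
    ∃ f : α → β, Injective f ∧ ∀ a, f a ∈ N a := by
  refine (all_card_le_biUnion_card_iff_exists_injective N).mp fun s => ?_
  -- Hall's condition, by double counting the pairs `(a, b)` with `a ∈ s` and `b ∈ N a`.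
  refine Nat.le_of_mul_le_mul_right (card_mul_le_card_mul (fun a b => b ∈ N a) ?_ ?_) hd
  · intro a ha
    rw [bipartiteAbove, filter_mem_eq_inter, inter_eq_right.mpr (subset_biUnion_of_mem N ha)]
    exact hN a
  · intro b _
    exact (card_le_card (filter_subset_filter _ (subset_univ s))).trans (hdeg b)

theorem exists_perms_of_regular {V : Type*} [Fintype V] [DecidableEq V] (r : ℕ)
    (D : V → V → Prop) [DecidableRel D] (hout : ∀ v, #{u | D v u} = r)
    (hin : ∀ v, #{u | D u v} = r) :
    ∃ σ : Fin r → Equiv.Perm V, (∀ i v, D v (σ i v)) ∧ ∀ v, Injective (σ · v) := by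
  induction r generalizing D with
  | zero => exact ⟨Fin.elim0, fun i => i.elim0, fun _ i => i.elim0⟩
  | succ r ih =>
    obtain ⟨f, hf, hfD⟩ := exists_injective_of_le_card_of_card_le (fun v => {u | D v u})
      r.succ_pos (fun v => (hout v).ge) (fun v => by simpa using (hin v).le)
    let π := Equiv.ofBijective f (Finite.injective_iff_bijective.mp hf)
    have hπ (v : V) : D v (π v) := (mem_filter.mp (hfD v)).2
    have hout' (v : V) : #{u | D v u ∧ π v ≠ u} = r := by
      rw [filter_and, filter_ne, inter_erase, inter_univ,
        card_erase_of_mem (mem_filter.mpr ⟨mem_univ _, hπ v⟩), hout, Nat.add_sub_cancel]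
    have hin' (v : V) : #{u | D u v ∧ π u ≠ v} = r := by
      have : ({u | D u v ∧ π u ≠ v} : Finset V) = ({u | D u v} : Finset V).erase (π.symm v) := by
        ext u; simp [Equiv.eq_symm_apply, and_comm]
      rw [this, card_erase_of_mem (by simpa using hπ (π.symm v)), hin, Nat.add_sub_cancel]
    obtain ⟨σ, hσD, hσinj⟩ := ih (fun u v => D u v ∧ π u ≠ v) hout' hin'
    refine ⟨Fin.cons π σ, Fin.cases hπ fun i v => (hσD i v).1, fun v => ?_⟩
    have : (fun i => (Fin.cons π σ : Fin (r + 1) → Equiv.Perm V) i v) =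
        Fin.cons (π v) (σ · v) := funext fun i => Fin.cases rfl (fun _ => rfl) i
    rw [this, Fin.cons_injective_iff]
    exact ⟨fun ⟨i, hi⟩ => (hσD i v).2 hi.symm, hσinj v⟩

theorem card_in_eq_of_le_of_card_out_eq {V : Type*} [Fintype V] (D : V → V → Prop)
    [DecidableRel D] {r : ℕ} (hout : ∀ v, #{u | D v u} = r) (hin : ∀ v, #{u | D u v} ≤ r)
    (v : V) : #{u | D u v} = r := by
  refine (sum_eq_sum_iff_of_le fun v _ => hin v).mp ?_ v (mem_univ v)
  exact (sum_card_bipartiteAbove_eq_sum_card_bipartiteBelow (r := D)).symm.trans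
    (sum_congr rfl fun u _ => hout u)

namespace SimpleGraph

variable {V : Type*} {G : SimpleGraph V}

theorem card_filter_mem_incidenceFinset_le_two [Fintype V] [DecidableEq V]
    [DecidableRel G.Adj] (e : Sym2 V) : #{v | e ∈ G.incidenceFinset v} ≤ 2 := by
  induction e with
  | _ x y =>
    refine (card_le_card (t := {x, y}) fun v hv => ?_).trans card_le_two
    simp only [mem_filter, mem_incidenceFinset, mk'_mem_incidenceSet_iff] at hv
    simpa using hv.2.2

open Classical in
theorem exists_balanced_orientation [Fintype V] [DecidableEq V] [DecidableRel G.Adj] {r : ℕ}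
    (hr : 0 < r) (hG : G.IsRegularOfDegree (2 * r)) :
    ∃ D : V → V → Prop, (∀ u v, D u v → G.Adj u v) ∧ (∀ u v, D u v → ¬ D v u) ∧
      (∀ v, #{u | D v u} = r) ∧ ∀ v, #{u | D u v} = r := by
  -- Hall gives each of the `r` slots `(v, i)` at `v` its own incident edge `s(v, φ i v)`:
  -- these are the edges leaving `v`.
  obtain ⟨g, hg, hgv⟩ := exists_injective_of_le_card_of_card_le
    (fun p : V × Fin r => G.incidenceFinset p.1) (by omega : 0 < 2 * r)
    (fun p => by rw [card_incidenceFinset_eq_degree, hG p.1])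
    (fun e => by
      rw [← univ_product_univ, filter_product_left (fun v => e ∈ G.incidenceFinset v),
        card_product, card_univ, Fintype.card_fin]
      exact Nat.mul_le_mul_right r (card_filter_mem_incidenceFinset_le_two e))
  have hφ (i : Fin r) (v : V) : ∃ u, G.Adj v u ∧ g (v, i) = s(v, u) := by
    obtain ⟨he, hv⟩ := (G.mem_incidenceFinset _ _).mp (hgv (v, i))
    obtain ⟨u, hu⟩ := Sym2.mem_iff_exists.mp hv
    exact ⟨u, by rwa [hu] at he, hu⟩
  choose φ hφadj hφg using hφ
  have hφinj (v : V) : Injective (φ · v) := fun i j hij => by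
    have : g (v, i) = g (v, j) := by rw [hφg, hφg]; exact congrArg _ hij
    exact congrArg Prod.snd (hg this)
  have hanti (i j : Fin r) (v : V) : φ j (φ i v) ≠ v := fun h => by
    have : g (v, i) = g (φ i v, j) := by rw [hφg, hφg, h, Sym2.eq_swap]
    exact G.ne_of_adj (hφadj i v) (congrArg Prod.fst (hg this))
  have hout (v : V) : #{u | ∃ i, φ i v = u} = r := by
    rw [univ_filter_exists, card_image_of_injective _ (hφinj v), card_univ, Fintype.card_fin]
  have hin (v : V) : #{u | ∃ i, φ i u = v} ≤ r := by
    have hdisj :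
        Disjoint ({u | ∃ i, φ i v = u} : Finset V) ({u | ∃ i, φ i u = v} : Finset V) := by
      simp only [disjoint_filter]
      rintro _ - ⟨i, rfl⟩ ⟨j, hj⟩
      exact hanti i j v hj
    have hsub : ({u | ∃ i, φ i v = u} : Finset V) ∪ ({u | ∃ i, φ i u = v} : Finset V) ⊆
        G.neighborFinset v := by
      refine union_subset ?_ ?_ <;> intro u hu <;>
        obtain ⟨i, rfl⟩ := (mem_filter.mp hu).2 <;> rw [mem_neighborFinset]
      exacts [hφadj i v, (hφadj i u).symm]
    have := card_le_card hsub
    rw [card_union_of_disjoint hdisj, hout, card_neighborFinset_eq_degree, hG v] at this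
    omega
  refine ⟨fun v u => ∃ i, φ i v = u, ?_, ?_, fun v => ?_, fun v => ?_⟩
  · rintro v _ ⟨i, rfl⟩
    exact hφadj i v
  · rintro v _ ⟨i, rfl⟩ ⟨j, hj⟩
    exact hanti i j v hj
  · convert hout v
  · convert card_in_eq_of_le_of_card_out_eq _ hout hin v

/-- The `i`-th 2-factor consists of the edges `s(v, σ i v)`. -/
def IsTwoFactorization (G : SimpleGraph V) {r : ℕ} (σ : Fin r → Equiv.Perm V) : Prop :=
  ∀ v, Set.BijOn (Sum.elim (fun i => σ i v) fun i => (σ i).symm v) Set.univ (G.neighborSet v)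

theorem exists_isTwoFactorization [Fintype V] [DecidableEq V] [DecidableRel G.Adj] {r : ℕ}
    (hr : 0 < r) (hG : G.IsRegularOfDegree (2 * r)) :
    ∃ σ : Fin r → Equiv.Perm V, G.IsTwoFactorization σ := by
  classical
  obtain ⟨D, hDadj, hDanti, hout, hin⟩ := exists_balanced_orientation hr hG
  obtain ⟨σ, hσD, hσinj⟩ := exists_perms_of_regular r D hout hin
  refine ⟨σ, fun v => ?_⟩
  have hmaps : Set.MapsTo (Sum.elim (fun i => σ i v) fun i => (σ i).symm v) Set.univ
      (G.neighborSet v) := by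
    rintro (i | i) -
    · exact hDadj _ _ (hσD i v)
    · simpa using (hDadj _ _ (hσD i ((σ i).symm v))).symm
  have hinj : Injective (Sum.elim (fun i => σ i v) fun i => (σ i).symm v) := by
    refine (hσinj v).sumElim (fun i j hij => hσinj ((σ i).symm v) ?_) fun i j hij => ?_
    · show σ i ((σ i).symm v) = σ j ((σ i).symm v)
      rw [Equiv.apply_symm_apply, hij, Equiv.apply_symm_apply]
    · have hv := hσD i v
      have hback := hσD j (σ i v)
      rw [hij] at hv hback
      rw [Equiv.apply_symm_apply] at hback
      exact hDanti _ _ hv hback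
  refine ⟨hmaps, hinj.injOn, ?_⟩
  rw [← coe_univ, ← coe_neighborFinset]
  refine surjOn_of_injOn_of_card_le _ (by rwa [coe_univ, coe_neighborFinset])
    (by rw [coe_univ]; exact hinj.injOn) ?_
  rw [card_neighborFinset_eq_degree, hG v, card_univ, Fintype.card_sum, Fintype.card_fin,
    two_mul]

open Classical in
noncomputable def factorLabel {M : Type*} [Zero M] {r : ℕ} (σ : Fin r → Equiv.Perm V)
    (a : Fin r → M) (e : Sym2 V) : M :=
  if h : ∃ p : Fin r × V, e = s(p.2, σ p.1 p.2) then a (Classical.choose h).1 else 0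

namespace IsTwoFactorization

variable {r : ℕ} {σ : Fin r → Equiv.Perm V} (h : G.IsTwoFactorization σ)
include h

theorem eq_of_mk_eq {i j : Fin r} {u v : V} (he : s(v, σ i v) = s(u, σ j u)) : i = j := by
  rcases Sym2.eq_iff.mp he with ⟨rfl, hσ⟩ | ⟨hv, hσ⟩
  · exact Sum.inl_injective
      ((h v).injOn (Set.mem_univ (Sum.inl i)) (Set.mem_univ (Sum.inl j)) hσ)
  · have := (h u).injOn (Set.mem_univ (Sum.inl j)) (Set.mem_univ (Sum.inr i))
      (show σ j u = (σ i).symm u by rw [← hv, ← hσ, Equiv.symm_apply_apply])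
    exact absurd this Sum.inl_ne_inr

variable {M : Type*} (a : Fin r → M)

theorem factorLabel_mk [Zero M] (i : Fin r) (v : V) : factorLabel σ a s(v, σ i v) = a i := by
  have hex : ∃ p : Fin r × V, s(v, σ i v) = s(p.2, σ p.1 p.2) := ⟨(i, v), rfl⟩
  rw [factorLabel, dif_pos hex, ← h.eq_of_mk_eq (Classical.choose_spec hex)]

theorem factorLabel_mk_symm [Zero M] (i : Fin r) (v : V) :
    factorLabel σ a s(v, (σ i).symm v) = a i := by
  rw [← h.factorLabel_mk a i ((σ i).symm v), Equiv.apply_symm_apply, Sym2.eq_swap]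

theorem exists_factorLabel_eq [Zero M] {e : Sym2 V} (he : e ∈ G.edgeSet) :
    ∃ i, factorLabel σ a e = a i := by
  induction e with
  | _ v u =>
    obtain ⟨i | i, -, rfl⟩ := (h v).surjOn (show u ∈ G.neighborSet v from he)
    exacts [⟨i, h.factorLabel_mk a i v⟩, ⟨i, h.factorLabel_mk_symm a i v⟩]

theorem sum_factorLabel [Fintype V] [DecidableRel G.Adj] [AddCommMonoid M] (v : V) :
    ∑ u ∈ G.neighborFinset v, factorLabel σ a s(v, u) = ∑ i, a i + ∑ i, a i := by
  rw [← sum_nbij (s := univ) _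
      (fun p _ => (G.mem_neighborFinset v _).mpr ((h v).mapsTo (Set.mem_univ p)))
      (by simpa using (h v).injOn) (by simpa using (h v).surjOn) (fun _ _ => rfl),
    Fintype.sum_sum_type]
  simp only [Sum.elim_inl, Sum.elim_inr, h.factorLabel_mk, h.factorLabel_mk_symm]

end IsTwoFactorization

end SimpleGraph

theorem exists_sum_eq_of_two_ne_zero {R : Type*} [Ring R] (h2 : (2 : R) ≠ 0) {r : ℕ}
    (hr : 2 ≤ r) (t : R) : ∃ a : Fin r → R, (∀ i, a i ≠ 0) ∧ ∑ i, a i = t := by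
  have : Nontrivial R := nontrivial_of_ne 2 0 h2
  induction r, hr using Nat.le_induction generalizing t with
  | base =>
    by_cases ht : t = 1
    · refine ⟨![2, -1], fun i => ?_, by simp [ht]; norm_num⟩
      fin_cases i <;> simp [h2]
    · refine ⟨![1, t - 1], fun i => ?_, by simp⟩
      fin_cases i <;> simp [sub_eq_zero, ht]
  | succ r _ ih =>
    obtain ⟨a, ha, hsum⟩ := ih (t - 1)
    exact ⟨Fin.cons 1 a, Fin.cases one_ne_zero ha, by rw [Fin.sum_cons, hsum, add_sub_cancel]⟩

theorem vertexLabelSum_eq_sum_neighborFinset {V : Type*} [Fintype V] (G : SimpleGraph V)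
    [DecidableRel G.Adj] {M : Type*} [AddCommMonoid M] (ℓ : Sym2 V → M) (v : V) :
    vertexLabelSum G ℓ v = ∑ u ∈ G.neighborFinset v, ℓ s(v, u) := by
  rw [vertexLabelSum, G.neighborFinset_eq_filter]
  congr 1; ext; simp

theorem IsRegularDeg.isRegularOfDegree {V : Type*} [Fintype V] {G : SimpleGraph V}
    [DecidableRel G.Adj] {d : ℕ} (h : IsRegularDeg G d) : G.IsRegularOfDegree d := fun v => by
  rw [← h v, degreeOf, ← G.card_neighborFinset_eq_degree, G.neighborFinset_eq_filter]
  congr 1; ext; simp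

theorem even_regular_odd_order_completely_magic_general {V : Type*} [Fintype V]
    (G : SimpleGraph V) (r k : ℕ) (hr : 2 ≤ r) (hk : 5 ≤ k) (hkodd : Odd k)
    (hreg : IsRegularDeg G (2 * r)) :
    CompletelyMagic G k := by
  classical
  intro c
  have : Fact (1 < k) := ⟨by omega⟩
  have h2 : IsUnit (2 : ZMod k) := by
    exact_mod_cast (ZMod.isUnit_iff_coprime 2 k).mpr (Nat.coprime_two_left.mpr hkodd)
  obtain ⟨σ, hσ⟩ := SimpleGraph.exists_isTwoFactorization (by omega) hreg.isRegularOfDegree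
  obtain ⟨a, ha, hsum⟩ := exists_sum_eq_of_two_ne_zero h2.ne_zero hr (↑h2.unit⁻¹ * c)
  refine ⟨SimpleGraph.factorLabel σ a, fun e he => ?_, fun v => ?_⟩
  · obtain ⟨i, hi⟩ := hσ.exists_factorLabel_eq a he
    exact hi ▸ ha i
  · rw [vertexLabelSum_eq_sum_neighborFinset, hσ.sum_factorLabel, hsum, ← two_mul, ← mul_assoc,
      h2.mul_val_inv, one_mul]

/-- A `2r`-regular graph of odd order `n ≥ 3` is completely `k`-magic for odd `k ≥ 5`. -/
theorem even_regular_odd_order_completely_magic {V : Type*} [Fintype V]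
    (G : SimpleGraph V) (r k : ℕ) (hr : 2 ≤ r) (hk : 5 ≤ k) (hkodd : Odd k)
    (hreg : IsRegularDeg G (2 * r)) (hn : 3 ≤ Fintype.card V)
    (hodd : Odd (Fintype.card V)) :
    CompletelyMagic G k :=
  even_regular_odd_order_completely_magic_general G r k hr hk hkodd hreg
end

section
/- Let r ≥ 3 and G an r-regular finite simple graph that is zero-sum 4-magic. If the order of G is odd, then the sum spectrum Σ_4(G) equals {0, 2} ⊆ ℤ_4. -/
/-!
Summing the vertex condition over all vertices counts every edge label twice, so in a graph of
odd order every vertex sum `c` satisfies `c = 2x` for some `x`, i.e. `c ∈ {0, 2}` in `ℤ₄`; the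
same count with all labels `1` shows that `r` is even. Conversely, the constant labeling `1` has
vertex sums `r`. By Hall's theorem an `r`-regular graph with `r > 0` has a permutation `f` with
`v ~ f v` for all `v`; labeling each edge `e` by `1` plus the number of `w` with `e = s(w, f w)`
gives vertex sums `r + 2`, because every vertex lies on exactly two of the edges `s(w, f w)`
(counted with multiplicity), and the labels stay in `{1, 2, 3}`. As `r` is even,
`{r, r + 2} = {0, 2}` in `ℤ₄`.
-/

open Finset

namespace SimpleGraph

variable {V : Type*} [Fintype V] {G : SimpleGraph V}

section

variable [DecidableRel G.Adj]

theorem vertexLabelSum_eq_sum_neighborFinset {M : Type*} [AddCommMonoid M] (ℓ : Sym2 V → M)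
    (v : V) : vertexLabelSum G ℓ v = ∑ u ∈ G.neighborFinset v, ℓ s(v, u) := by
  rw [vertexLabelSum, neighborFinset_eq_filter]
  congr

theorem degreeOf_eq_degree (v : V) : degreeOf G v = G.degree v := by
  rw [degreeOf, ← card_neighborFinset_eq_degree, neighborFinset_eq_filter]
  congr

theorem isRegularOfDegree_of_isRegularDeg {r : ℕ} (h : IsRegularDeg G r) :
    G.IsRegularOfDegree r := fun v => (degreeOf_eq_degree v).symm.trans (h v)

theorem sum_sum_neighborFinset_eq_sum_darts {M : Type*} [AddCommMonoid M] (f : V → V → M) :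
    ∑ v, ∑ u ∈ G.neighborFinset v, f v u = ∑ d : G.Dart, f d.fst d.snd := by
  rw [sum_sigma']
  refine sum_bij' (fun x hx => ⟨(x.1, x.2), by simpa using hx⟩) (fun d _ => ⟨d.fst, d.snd⟩)
    ?_ ?_ ?_ ?_ ?_ <;> simp

theorem sum_vertexLabelSum_eq_two_nsmul {M : Type*} [AddCommMonoid M] (ℓ : Sym2 V → M) :
    ∑ v, vertexLabelSum G ℓ v = 2 • ∑ e ∈ G.edgeFinset, ℓ e := by
  classical
  calc ∑ v, vertexLabelSum G ℓ v
      = ∑ d : G.Dart, ℓ d.edge := by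
        simp only [vertexLabelSum_eq_sum_neighborFinset, sum_sum_neighborFinset_eq_sum_darts]
        rfl
    _ = ∑ e ∈ G.edgeFinset, ∑ d : G.Dart with d.edge = e, ℓ e := by
        rw [sum_fiberwise_of_maps_to' fun d _ => G.mem_edgeFinset.2 d.edge_mem]
    _ = ∑ e ∈ G.edgeFinset, 2 • ℓ e := sum_congr rfl fun e he => by
        rw [sum_const, G.dart_edge_fiber_card e (G.mem_edgeFinset.1 he)]
    _ = 2 • ∑ e ∈ G.edgeFinset, ℓ e := (smul_sum ..).symm

end

theorem even_of_vertexLabelSum_eq_of_odd_card {M : Type*} [AddCommGroup M] {ℓ : Sym2 V → M}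
    {c : M} (hℓ : ∀ v, vertexLabelSum G ℓ v = c) (hodd : Odd (Fintype.card V)) : Even c := by
  classical
  obtain ⟨m, hm⟩ := hodd
  have hsum := sum_vertexLabelSum_eq_two_nsmul (G := G) ℓ
  simp only [hℓ, sum_const, card_univ, hm] at hsum
  refine ⟨∑ e ∈ G.edgeFinset, ℓ e - m • c, ?_⟩
  rw [← two_nsmul, nsmul_sub, ← hsum, add_nsmul, one_nsmul, mul_nsmul']
  abel

section

variable [DecidableRel G.Adj]

theorem IsRegularOfDegree.even_of_odd_card {r : ℕ} (hreg : G.IsRegularOfDegree r)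
    (hodd : Odd (Fintype.card V)) : Even r := by
  have h := even_of_vertexLabelSum_eq_of_odd_card (G := G) (ℓ := fun _ => (1 : ℤ)) (c := r)
    (fun v => by simp [vertexLabelSum_eq_sum_neighborFinset, hreg.degree_eq]) hodd
  exact_mod_cast h

theorem IsRegularOfDegree.exists_equiv_adj {r : ℕ} (hreg : G.IsRegularOfDegree r) (hr : 0 < r) :
    ∃ f : V ≃ V, ∀ v, G.Adj v (f v) := by
  classical
  suffices hall : ∀ A : Finset V, #A ≤ #{b | ∃ a ∈ A, G.Adj a b} by
    obtain ⟨f, hf, hadj⟩ := (Fintype.all_card_le_filter_rel_iff_exists_injective G.Adj).1 hall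
    exact ⟨Equiv.ofBijective f hf.bijective_of_finite, hadj⟩
  intro A
  refine Nat.le_of_mul_le_mul_right (card_mul_le_card_mul G.Adj (m := r) (n := r) ?_ ?_) hr
  · intro a ha
    rw [← hreg.degree_eq a, ← card_neighborFinset_eq_degree]
    refine card_le_card fun b hb => ?_
    rw [mem_neighborFinset] at hb
    simp only [bipartiteAbove, mem_filter, mem_univ, true_and]
    exact ⟨⟨a, ha, hb⟩, hb⟩
  · intro b _
    rw [← hreg.degree_eq b, ← card_neighborFinset_eq_degree]
    refine card_le_card fun a ha => ?_
    rw [mem_neighborFinset]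
    exact (mem_filter.1 ha).2.symm

theorem IsRegularOfDegree.isSumMagic_natCast {k r : ℕ} (hk : k ≠ 1)
    (hreg : G.IsRegularOfDegree r) : IsSumMagic G k r :=
  have := ZMod.nontrivial_iff.2 hk
  ⟨fun _ => 1, fun _ _ => one_ne_zero, fun v => by
    simp [vertexLabelSum_eq_sum_neighborFinset, hreg.degree_eq]⟩

theorem sum_neighborFinset_arcs_eq_two [DecidableEq V] {f : V ≃ V} (hf : ∀ v, G.Adj v (f v))
    (v : V) :
    ∑ u ∈ G.neighborFinset v, ((if f v = u then 1 else 0) + (if f u = v then 1 else 0)) = 2 := by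
  have hpred : G.Adj v (f.symm v) := G.adj_symm (by simpa using hf (f.symm v))
  rw [sum_add_distrib, sum_ite_eq]
  simp only [← Equiv.eq_symm_apply, sum_ite_eq', mem_neighborFinset, hf v, hpred, if_true]

theorem IsRegularOfDegree.isSumMagic_natCast_add_two {k r : ℕ} (hk : 4 ≤ k)
    (hreg : G.IsRegularOfDegree r) (hr : 0 < r) : IsSumMagic G k (r + 2) := by
  classical
  obtain ⟨f, hf⟩ := hreg.exists_equiv_adj hr
  let m : V → V → ℕ := fun a b => (if f a = b then 1 else 0) + (if f b = a then 1 else 0)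
  refine ⟨Sym2.lift ⟨fun a b => ((1 + m a b : ℕ) : ZMod k), fun a b => by simp only [m, add_comm]⟩,
    ?_, fun v => ?_⟩
  · rintro ⟨a, b⟩ -
    rw [Sym2.lift_mk, Ne, ZMod.natCast_eq_zero_iff]
    refine Nat.not_dvd_of_pos_of_lt (by omega) ?_
    simp only [m]
    split_ifs <;> omega
  · rw [vertexLabelSum_eq_sum_neighborFinset]
    simp only [Sym2.lift_mk]
    rw [← Nat.cast_sum, sum_add_distrib, sum_neighborFinset_arcs_eq_two hf, sum_const,
      card_neighborFinset_eq_degree, hreg.degree_eq, smul_eq_mul, mul_one, Nat.cast_add,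
      Nat.cast_ofNat]

end

end SimpleGraph

theorem zero_sum_four_magic_odd_order_general {V : Type*} [Fintype V] (G : SimpleGraph V)
    (r : ℕ) (hr : 3 ≤ r) (hreg : IsRegularDeg G r)
    (hodd : Odd (Fintype.card V)) :
    sumSpectrum G 4 = {0, 2} := by
  have h_double : ∀ x : ZMod 4, x + x = 0 ∨ x + x = 2 := by decide
  have h_shift : ∀ x c : ZMod 4, c = 0 ∨ c = 2 → c = x + x ∨ c = x + x + 2 := by decide
  classical
  have hreg' := SimpleGraph.isRegularOfDegree_of_isRegularDeg hreg
  obtain ⟨t, rfl⟩ := hreg'.even_of_odd_card hodd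
  ext c
  constructor
  · rintro ⟨ℓ, -, hℓ⟩
    obtain ⟨x, rfl⟩ := SimpleGraph.even_of_vertexLabelSum_eq_of_odd_card hℓ hodd
    exact h_double x
  · intro hc
    rcases h_shift t c hc with rfl | rfl
    · exact_mod_cast hreg'.isSumMagic_natCast (by decide)
    · exact_mod_cast hreg'.isSumMagic_natCast_add_two le_rfl (by omega)

/-- A zero-sum `4`-magic `r`-regular graph (`r ≥ 3`) of odd order has sum spectrum `{0, 2}`. -/
theorem zero_sum_four_magic_odd_order {V : Type*} [Fintype V] (G : SimpleGraph V)
    (r : ℕ) (hr : 3 ≤ r) (hreg : IsRegularDeg G r) (hzero : IsSumMagic G 4 0)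
    (hodd : Odd (Fintype.card V)) :
    sumSpectrum G 4 = {0, 2} :=
  zero_sum_four_magic_odd_order_general G r hr hreg hodd
end

section
/- Let G be an r-regular finite simple graph, where r ≥ 3, r ≡ 0 (mod 3), and r is odd. Then G is completely 3-magic if and only if G has a spanning subgraph H such that the degree of every vertex v in H satisfies deg_H(v) ≡ 1 (mod 3). -/
/-! A labeling with values in `{a, b}` that is `a` exactly on the edges of a spanning subgraph `H`
has vertex sums `deg_H v • (a - b) + deg_G v • b`. When all degrees of `G` vanish mod 3 and all
degrees of `H` are `1` mod 3 this is `a - b`, and every element of `ZMod 3` is such a difference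
of nonzero elements. Conversely, a `2`-sum labeling only uses the labels `1` and `2`, so the edges
labeled `1` form a subgraph `H` with `-deg_H v = 2`, i.e. `deg_H v ≡ 1 (mod 3)`. -/

section
variable {V : Type*} [Fintype V] {G : SimpleGraph V}

lemma vertexLabelSum_congr {M : Type*} [AddCommMonoid M] {ℓ ℓ' : Sym2 V → M}
    (h : ∀ e ∈ G.edgeSet, ℓ e = ℓ' e) (v : V) :
    vertexLabelSum G ℓ v = vertexLabelSum G ℓ' v := by
  classical
  unfold vertexLabelSum
  exact Finset.sum_congr rfl fun u hu => h _ (Finset.mem_filter.1 hu).2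

open Classical in
lemma vertexLabelSum_ite_mem_edgeSet {M : Type*} [AddCommGroup M] {H : SimpleGraph V}
    (hle : H ≤ G) (a b : M) (v : V) :
    vertexLabelSum G (fun e => if e ∈ H.edgeSet then a else b) v =
      degreeOf H v • (a - b) + degreeOf G v • b := by
  have hsplit : ∀ p : Prop, [Decidable p] → (if p then a else b) = (if p then a - b else 0) + b :=
    fun p _ => by split_ifs <;> simp
  have hfilter :
      (Finset.univ.filter (G.Adj v)).filter (H.Adj v) = Finset.univ.filter (H.Adj v) := by
    ext u; simpa using fun h => hle h
  simp only [vertexLabelSum, degreeOf, SimpleGraph.mem_edgeSet, hsplit, Finset.sum_add_distrib,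
    ← Finset.sum_filter, Finset.sum_const]
  rw [hfilter]

lemma isSumMagic_sub {k : ℕ} {H : SimpleGraph V} (hG : ∀ v, (degreeOf G v : ZMod k) = 0)
    (hle : H ≤ G) (hH : ∀ v, (degreeOf H v : ZMod k) = 1) {a b : ZMod k} (ha : a ≠ 0)
    (hb : b ≠ 0) : IsSumMagic G k (a - b) := by
  classical
  refine ⟨fun e => if e ∈ H.edgeSet then a else b,
    fun e _ => by dsimp only; split_ifs <;> assumption, fun v => ?_⟩
  rw [vertexLabelSum_ite_mem_edgeSet hle, nsmul_eq_mul, nsmul_eq_mul, hG, hH]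
  ring

open Classical in
lemma exists_le_degreeOf_eq_one_of_isSumMagic_two (hG : ∀ v, (degreeOf G v : ZMod 3) = 0)
    (hmagic : IsSumMagic G 3 2) : ∃ H ≤ G, ∀ v, (degreeOf H v : ZMod 3) = 1 := by
  obtain ⟨ℓ, hne, hsum⟩ := hmagic
  obtain ⟨H, hHdef⟩ : ∃ H, H = G.deleteEdges (ℓ ⁻¹' {2}) := ⟨_, rfl⟩
  have hle : H ≤ G := hHdef ▸ G.deleteEdges_le _
  -- The only nonzero labels are `1` and `2`, so `ℓ` is `1` on `H` and `2` on the rest of `G`.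
  have hℓ : ∀ e ∈ G.edgeSet, ℓ e = if e ∈ H.edgeSet then 1 else 2 := by
    intro e he
    have : ∀ x : ZMod 3, x ≠ 0 → x ≠ 2 → x = 1 := by decide
    by_cases h2 : ℓ e = 2
    · simp [hHdef, h2]
    · simp [hHdef, he, this _ (hne e he) h2]
  refine ⟨H, hle, fun v => ?_⟩
  have hv := hsum v
  rw [vertexLabelSum_congr hℓ, vertexLabelSum_ite_mem_edgeSet hle,
    nsmul_eq_mul, nsmul_eq_mul, hG] at hv
  linear_combination -hv - ZMod.natCast_self 3
end

theorem completely_three_magic_iff_factor_general {V : Type*} [Fintype V] (G : SimpleGraph V)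
    (r : ℕ) (hdvd : r % 3 = 0)
    (hreg : IsRegularDeg G r) :
    CompletelyMagic G 3 ↔
      ∃ H : SimpleGraph V, H ≤ G ∧ ∀ v : V, degreeOf H v % 3 = 1 := by
  have hG : ∀ v, (degreeOf G v : ZMod 3) = 0 := fun v => by
    rw [hreg v, ZMod.natCast_eq_zero_iff]; omega
  have hmod : ∀ n : ℕ, (n : ZMod 3) = 1 ↔ n % 3 = 1 := fun n => by
    simpa using ZMod.natCast_eq_natCast_iff' n 1 3
  constructor
  · intro hmagic
    obtain ⟨H, hle, hH⟩ := exists_le_degreeOf_eq_one_of_isSumMagic_two hG (hmagic 2)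
    exact ⟨H, hle, fun v => (hmod _).1 (hH v)⟩
  · rintro ⟨H, hle, hH⟩ c
    obtain ⟨a, b, ha, hb, rfl⟩ : ∃ a b : ZMod 3, a ≠ 0 ∧ b ≠ 0 ∧ a - b = c := by
      revert c; decide
    exact isSumMagic_sub hG hle (fun v => (hmod _).2 (hH v)) ha hb

/-- For `r ≥ 3` odd with `3 ∣ r`, an `r`-regular graph is completely `3`-magic iff
it has a spanning subgraph all of whose degrees are `≡ 1 (mod 3)`. -/
theorem completely_three_magic_iff_factor {V : Type*} [Fintype V] (G : SimpleGraph V)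
    (r : ℕ) (hr : 3 ≤ r) (hdvd : r % 3 = 0) (hodd : Odd r)
    (hreg : IsRegularDeg G r) :
    CompletelyMagic G 3 ↔
      ∃ H : SimpleGraph V, H ≤ G ∧ ∀ v : V, degreeOf H v % 3 = 1 :=
  completely_three_magic_iff_factor_general G r hdvd hreg
end

section
/- Let n ≥ 3 and k ≥ 3 be integers with n even, and let C_n be the cycle graph on n vertices. Then C_n is completely k-magic. -/
/-! Label the edges `s(i, i + 1)` of the cycle by `a` for even `i` and by `c - a` for odd `i`, where
`a ∉ {0, c}` exists because `k ≥ 3`. As the cycle has even length, the parity of `i + 1` is the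
opposite of that of `i` also across the wrap-around edge `s(n - 1, 0)`, so every vertex meets one edge
of each label and all vertex sums are `a + (c - a) = c`. -/

open SimpleGraph

theorem Fin.even_val_add_one_iff {n : ℕ} [NeZero n] (hn : Even n) (i : Fin n) :
    Even (i + 1).val ↔ ¬Even i.val := by
  rw [Fin.val_add, Fin.val_one', Nat.add_mod_mod, Nat.even_iff, Nat.mod_mod_of_dvd _ hn.two_dvd,
    ← Nat.even_iff, Nat.even_add_one]

theorem Fin.add_one_add_one_ne_self {n : ℕ} (i : Fin (n + 3)) : i + 1 + 1 ≠ i := by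
  rw [add_assoc, ne_eq, add_eq_left]
  exact ne_of_beq_false rfl

section CycleLabel

variable {n : ℕ} {M : Type*}

theorem vertexLabelSum_cycleGraph [AddCommMonoid M] (ℓ : Sym2 (Fin (n + 3)) → M)
    (v : Fin (n + 3)) :
    vertexLabelSum (cycleGraph (n + 3)) ℓ v = ℓ s(v, v - 1) + ℓ s(v, v + 1) := by
  have hne : v - 1 ≠ v + 1 := fun h =>
    Fin.add_one_add_one_ne_self (v - 1) (by rw [sub_add_cancel, h])
  classical
  rw [vertexLabelSum, ← Finset.sum_pair (f := fun u => ℓ s(v, u)) hne,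
    ← cycleGraph_neighborFinset, neighborFinset_eq_filter]
  convert rfl

open Classical in
noncomputable def alternatingCycleLabel [NeZero n] (x y : M) (e : Sym2 (Fin n)) : M :=
  if ∃ i : Fin n, Even i.val ∧ e = s(i, i + 1) then x else y

theorem alternatingCycleLabel_mk_add_one (x y : M) (v : Fin (n + 3)) :
    alternatingCycleLabel x y s(v, v + 1) = if Even v.val then x else y := by
  have hmk : ∀ i : Fin (n + 3), s(v, v + 1) = s(i, i + 1) ↔ v = i := by
    refine fun i => ⟨fun h => ?_, fun h => h ▸ rfl⟩
    rcases Sym2.eq_iff.1 h with ⟨h, -⟩ | ⟨rfl, h⟩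
    · exact h
    · exact absurd h (Fin.add_one_add_one_ne_self i)
  simp only [alternatingCycleLabel, hmk, exists_eq_right']

theorem vertexLabelSum_alternatingCycleLabel [AddCommMonoid M] (heven : Even (n + 3)) (x y : M)
    (v : Fin (n + 3)) :
    vertexLabelSum (cycleGraph (n + 3)) (alternatingCycleLabel x y) v = x + y := by
  rw [vertexLabelSum_cycleGraph, Sym2.eq_swap, ← sub_add_cancel v 1, add_sub_cancel_right,
    alternatingCycleLabel_mk_add_one, alternatingCycleLabel_mk_add_one]
  simp only [Fin.even_val_add_one_iff heven]
  split_ifs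
  exacts [rfl, add_comm y x]

end CycleLabel

/-- The cycle `C_n` with `n ≥ 3` even is completely `k`-magic for every `k ≥ 3`. -/
theorem even_cycle_completely_magic (n k : ℕ) (hn : 3 ≤ n) (hneven : Even n)
    (hk : 3 ≤ k) :
    CompletelyMagic (SimpleGraph.cycleGraph n) k := by
  obtain ⟨m, rfl⟩ := Nat.exists_eq_add_of_le' hn
  have : NeZero k := ⟨by omega⟩
  intro c
  obtain ⟨a, ha0, hac⟩ : ∃ a : ZMod k, a ≠ 0 ∧ a ≠ c :=
    ENat.exists_ne_ne_of_three_le (by simpa [ENat.card_eq_coe_fintype_card] using hk) 0 c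
  refine ⟨alternatingCycleLabel a (c - a), fun e _ => ?_, fun v => ?_⟩
  · unfold alternatingCycleLabel
    split_ifs
    exacts [ha0, sub_ne_zero.2 hac.symm]
  · rw [vertexLabelSum_alternatingCycleLabel hneven, add_sub_cancel]
end

section
/- Let k ≥ 4 be an even integer and G a finite simple graph with an odd number of vertices. If c ∈ ℤ_k is a magic sum of G (i.e., G is c-sum k-magic), then c is even, i.e., c = 2m for some m ∈ ℤ_k. In particular, there is no completely k-magic graph of odd order. -/
namespace SimpleGraph

variable {V : Type*} [Fintype V] (G : SimpleGraph V)

theorem sum_vertexLabelSum_eq_sum_darts [DecidableRel G.Adj] {M : Type*} [AddCommMonoid M]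
    (ℓ : Sym2 V → M) :
    ∑ v, vertexLabelSum G ℓ v = ∑ d : G.Dart, ℓ d.edge := by
  classical
  rw [← Finset.sum_fiberwise_of_maps_to (g := fun d : G.Dart => d.fst) (t := Finset.univ)
    fun _ _ => Finset.mem_univ _]
  refine Finset.sum_congr rfl fun v _ => ?_
  refine Finset.sum_bij' (fun u hu => ⟨(v, u), by simpa using hu⟩) (fun d _ => d.snd)
    (fun _ _ => by simp) ?_ (fun _ _ => rfl) ?_ (fun _ _ => rfl)
  · rintro d hd
    obtain rfl := (Finset.mem_filter.1 hd).2
    simp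
  · rintro d hd
    obtain rfl := (Finset.mem_filter.1 hd).2
    rfl

theorem sum_darts_edge_eq_two_nsmul [DecidableRel G.Adj] {M : Type*} [AddCommMonoid M]
    (f : Sym2 V → M) :
    ∑ d : G.Dart, f d.edge = 2 • ∑ e ∈ G.edgeFinset, f e := by
  classical
  rw [← Finset.sum_fiberwise_of_maps_to (g := Dart.edge) (t := G.edgeFinset)
    fun d _ => G.mem_edgeFinset.2 d.edge_mem, Finset.smul_sum]
  refine Finset.sum_congr rfl fun e he => ?_
  rw [Finset.sum_congr rfl fun d hd => congrArg f (Finset.mem_filter.1 hd).2, Finset.sum_const,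
    G.dart_edge_fiber_card e (G.mem_edgeFinset.1 he)]

theorem exists_eq_two_mul_of_vertexLabelSum_eq {R : Type*} [CommRing R] (ℓ : Sym2 V → R) {c : R}
    (hc : ∀ v, vertexLabelSum G ℓ v = c) (hodd : Odd (Fintype.card V)) :
    ∃ m, c = 2 * m := by
  classical
  obtain ⟨t, ht⟩ := hodd
  have hsum : (Fintype.card V : R) * c = 2 * ∑ e ∈ G.edgeFinset, ℓ e := by
    rw [two_mul, ← two_nsmul, ← sum_darts_edge_eq_two_nsmul, ← sum_vertexLabelSum_eq_sum_darts]
    simp [hc]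
  refine ⟨∑ e ∈ G.edgeFinset, ℓ e - t * c, ?_⟩
  rw [ht] at hsum
  push_cast at hsum
  linear_combination hsum

end SimpleGraph

theorem ZMod.one_ne_two_mul {k : ℕ} (hk : Even k) (m : ZMod k) : (1 : ZMod k) ≠ 2 * m := by
  intro h
  have := congrArg (ZMod.castHom hk.two_dvd (ZMod 2)) h
  rw [map_one, map_mul, map_ofNat, show (2 : ZMod 2) = 0 from rfl, zero_mul] at this
  exact one_ne_zero this

theorem odd_order_magic_sum_even_general {V : Type*} [Fintype V] (G : SimpleGraph V)
    (k : ℕ) (hkeven : Even k) (hodd : Odd (Fintype.card V)) :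
    (∀ c : ZMod k, IsSumMagic G k c → ∃ m : ZMod k, c = 2 * m) ∧
    ¬ CompletelyMagic G k := by
  have magic_sum_even (c : ZMod k) : IsSumMagic G k c → ∃ m : ZMod k, c = 2 * m :=
    fun ⟨ℓ, _, hℓ⟩ => G.exists_eq_two_mul_of_vertexLabelSum_eq ℓ hℓ hodd
  refine ⟨magic_sum_even, fun hcomplete => ?_⟩
  obtain ⟨m, hm⟩ := magic_sum_even 1 (hcomplete 1)
  exact ZMod.one_ne_two_mul hkeven m hm

/-- For even `k ≥ 4`, every magic sum of a graph of odd order is even; in particular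
no graph of odd order is completely `k`-magic. -/
theorem odd_order_magic_sum_even {V : Type*} [Fintype V] (G : SimpleGraph V)
    (k : ℕ) (hk : 4 ≤ k) (hkeven : Even k) (hodd : Odd (Fintype.card V)) :
    (∀ c : ZMod k, IsSumMagic G k c → ∃ m : ZMod k, c = 2 * m) ∧
    ¬ CompletelyMagic G k :=
  odd_order_magic_sum_even_general G k hkeven hodd
end

section
/- Let k ≥ 3 and r ≥ 3 be integers, and let G be an r-regular finite simple graph that is zero-sum k-magic. If G has a perfect matching (a 1-factor), then G is completely k-magic. -/
/-! Label the edges of the perfect matching by `a` and all other edges by `b`: every vertex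
then sums to `a + (r - 1) b`. For `c ≠ 0` take `b = 1, a = c - (r - 1)`, or `b = 2, a = -c` when
`r - 1 = c`; this needs `2 ≠ 0`, i.e. `k ≥ 3`. The case `c = 0` is the zero-sum hypothesis. -/

theorem exists_ne_zero_add_mul_eq {R : Type*} [Ring R] (h2 : (2 : R) ≠ 0) (m : R) {c : R}
    (hc : c ≠ 0) : ∃ a b : R, a ≠ 0 ∧ b ≠ 0 ∧ a + m * b = c := by
  by_cases hm : m = c
  · exact ⟨-c, 2, neg_ne_zero.mpr hc, h2, by rw [hm]; noncomm_ring⟩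
  · have h1 : (1 : R) ≠ 0 := fun h => h2 (by rw [← one_add_one_eq_two, h, add_zero])
    exact ⟨c - m, 1, sub_ne_zero.mpr (Ne.symm hm), h1, by noncomm_ring⟩

theorem ZMod.two_ne_zero_of_three_le {k : ℕ} (hk : 3 ≤ k) : (2 : ZMod k) ≠ 0 := by
  have h : ((2 : ℕ) : ZMod k) ≠ 0 := by
    rw [Ne, ZMod.natCast_eq_zero_iff]
    exact fun hdvd => by have := Nat.le_of_dvd two_pos hdvd; omega
  exact_mod_cast h

section

variable {V : Type*} [Fintype V] {G H : SimpleGraph V}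

open Classical in
theorem vertexLabelSum_ite_of_le {M : Type*} [AddCommMonoid M] (hHG : H ≤ G) (a b : M) (v : V) :
    vertexLabelSum G (fun e => if e ∈ H.edgeSet then a else b) v =
      degreeOf H v • a + (degreeOf G v - degreeOf H v) • b := by
  have hH : (Finset.univ.filter fun u => G.Adj v u).filter (fun u => H.Adj v u) =
      Finset.univ.filter fun u => H.Adj v u := by
    ext u
    simpa using fun h => hHG h
  have hsplit := Finset.card_filter_add_card_filter_not
    (s := Finset.univ.filter fun u => G.Adj v u) (p := fun u => H.Adj v u)
  rw [hH] at hsplit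
  simp only [vertexLabelSum, SimpleGraph.mem_edgeSet, Finset.sum_ite, Finset.sum_const, hH]
  unfold degreeOf
  congr 2
  omega

theorem isSumMagic_of_regular_le {k r s : ℕ} (hHG : H ≤ G) (hG : IsRegularDeg G r)
    (hH : IsRegularDeg H s) {a b : ZMod k} (ha : a ≠ 0) (hb : b ≠ 0) :
    IsSumMagic G k (s • a + (r - s) • b) := by
  classical
  refine ⟨fun e => if e ∈ H.edgeSet then a else b, fun e _ => ?_, fun v => ?_⟩
  · dsimp only
    split_ifs
    exacts [ha, hb]
  · rw [vertexLabelSum_ite_of_le hHG, hG v, hH v]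

end

theorem completely_magic_of_perfect_matching_general {V : Type*} [Fintype V] (G : SimpleGraph V)
    (r k : ℕ) (hk : 3 ≤ k) (hreg : IsRegularDeg G r)
    (hzero : IsSumMagic G k 0)
    (hpm : ∃ M : SimpleGraph V, M ≤ G ∧ IsRegularDeg M 1) :
    CompletelyMagic G k := by
  intro c
  rcases eq_or_ne c 0 with rfl | hc
  · exact hzero
  obtain ⟨M, hMG, hM⟩ := hpm
  obtain ⟨a, b, ha, hb, rfl⟩ :=
    exists_ne_zero_add_mul_eq (ZMod.two_ne_zero_of_three_le hk) ((r - 1 : ℕ) : ZMod k) hc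
  simpa [nsmul_eq_mul] using isSumMagic_of_regular_le hMG hreg hM ha hb

/-- A zero-sum `k`-magic `r`-regular graph (`k, r ≥ 3`) with a perfect matching is
completely `k`-magic. -/
theorem completely_magic_of_perfect_matching {V : Type*} [Fintype V] (G : SimpleGraph V)
    (r k : ℕ) (hr : 3 ≤ r) (hk : 3 ≤ k) (hreg : IsRegularDeg G r)
    (hzero : IsSumMagic G k 0)
    (hpm : ∃ M : SimpleGraph V, M ≤ G ∧ IsRegularDeg M 1) :
    CompletelyMagic G k :=
  completely_magic_of_perfect_matching_general G r k hk hreg hzero hpm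
end
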